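/- arXiv:2005.07938 — 2 statements merged into one kernel-verified Lean document; each statement's English description precedes it below -/
import Mathlib

section
/- Let d ≥ 2, 0 < δ ≤ 1 and n = 2^{d−1}. Then the normalised quantization error of the design D(d,δ) satisfies n^{2/d}·θ(D(d,δ))/(4d) = 2^{−2/d}·(δ² − δ + 1/3 + 2δ/(d(d+1))). -/
open MeasureTheory Filter

noncomputable section

/-- The cube `[-1,1]^d` in `ℝ^d`. -/
def cube (d : ℕ) : Set (EuclideanSpace ℝ (Fin d)) := {x | ∀ i, x i ∈ Set.Icc (-1 : ℝ) 1}

/-- The constant vector `(c,…,c) ∈ ℝ^d`. -/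
def const (d : ℕ) (c : ℝ) : EuclideanSpace ℝ (Fin d) := WithLp.toLp 2 (fun _ => c)

/-- The design `D(d,δ)`: the `2^{d-1}` points `δ·ε`, `ε` a sign vector with an even
number of `-1` entries. -/
def design (d : ℕ) (δ : ℝ) : Set (EuclideanSpace ℝ (Fin d)) :=
  {z | ∃ ε : Fin d → ℝ, (∀ i, ε i = 1 ∨ ε i = -1) ∧ Even {i | ε i = -1}.ncard ∧
        z = fun i => δ * ε i}

/-- `C_{d,z,ρ}`: fraction of the cube `[-1,1]^d` covered by the closed ball `B(z,ρ)`. -/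
def coverOne (d : ℕ) (z : EuclideanSpace ℝ (Fin d)) (ρ : ℝ) : ℝ :=
  (volume (cube d ∩ Metric.closedBall z ρ)).toReal / 2 ^ d

/-- `C_d(Z,r)`: fraction of the cube `[-1,1]^d` covered by the union of balls of
radius `r` centred at points of `Z`. -/
def cover (d : ℕ) (Z : Set (EuclideanSpace ℝ (Fin d))) (r : ℝ) : ℝ :=
  (volume (cube d ∩ ⋃ z ∈ Z, Metric.closedBall z r)).toReal / 2 ^ d

/-- Mean squared quantization error `θ(Z)`. -/
def quantErr (d : ℕ) (Z : Set (EuclideanSpace ℝ (Fin d))) : ℝ :=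
  (∫ x in cube d, ⨅ z : Z, ‖x - (z : EuclideanSpace ℝ (Fin d))‖ ^ 2) / 2 ^ d

/-- The cube `C_0 = [0,1]^d`. -/
def C0 (d : ℕ) : Set (EuclideanSpace ℝ (Fin d)) := {x | ∀ i, x i ∈ Set.Icc (0 : ℝ) 1}

/-- The set `U_j`. -/
def U (d : ℕ) (j : Fin d) : Set (EuclideanSpace ℝ (Fin d)) :=
  {x | -1 ≤ x j ∧ x j ≤ 0 ∧ ∀ k, k ≠ j → |x j| ≤ x k ∧ x k ≤ 1}

/-!
Since `‖x - δε‖² = ‖x‖² + dδ² - 2δ ∑ εᵢxᵢ`, the nearest design point to `x` maximises `∑ εᵢxᵢ` over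
sign vectors with `∏ εᵢ = 1`. Substituting `ε = sgn(x)·η` turns this into maximising `∑ ηᵢ|xᵢ|` over
sign vectors with `∏ ηᵢ = ∏ sgn xᵢ`; the maximum is `∑ |xᵢ|` if that product is `1`, and
`∑ |xᵢ| - 2 minᵢ |xᵢ|` otherwise. Now average over independent uniform coordinates on `[-1, 1]`:
`E xᵢ² = 1/3`, `E |xᵢ| = 1/2`, `E minᵢ |xᵢ| = 1/(d+1)` because `P(minᵢ |xᵢ| > t) = (1-t)^d`, and
`E (∏ sgn xᵢ) minᵢ |xᵢ| = 0` because negating one coordinate preserves the measure and flips the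
sign of the integrand. Hence `θ(D(d,δ)) = dδ² - dδ + d/3 + 2δ/(d+1)`.
-/

open Finset

section SignVectors

variable {ι : Type*}

lemma sign_mul_sign {a b : ℝ} (ha : a = 1 ∨ a = -1) (hb : b = 1 ∨ b = -1) :
    a * b = 1 ∨ a * b = -1 := by
  rcases ha with rfl | rfl <;> rcases hb with rfl | rfl <;> norm_num

/-- Coordinatewise sign of `x`, with `0` counted as positive. -/
def signVec (x : ι → ℝ) (i : ι) : ℝ := if x i < 0 then -1 else 1

lemma signVec_eq (x : ι → ℝ) (i : ι) : signVec x i = 1 ∨ signVec x i = -1 := by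
  unfold signVec; split_ifs <;> simp

lemma signVec_mul_self (x : ι → ℝ) (i : ι) : signVec x i * signVec x i = 1 := by
  rcases signVec_eq x i with h | h <;> rw [h] <;> norm_num

lemma signVec_mul (x : ι → ℝ) (i : ι) : signVec x i * x i = |x i| := by
  unfold signVec
  split_ifs with h
  · rw [abs_of_neg h]; ring
  · rw [abs_of_nonneg (not_lt.mp h), one_mul]

variable [Fintype ι]

lemma even_ncard_eq_neg_one_iff_prod_eq_one {ε : ι → ℝ} (hε : ∀ i, ε i = 1 ∨ ε i = -1) :
    Even {i | ε i = -1}.ncard ↔ ∏ i, ε i = 1 := by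
  classical
  have hε' : ∀ i, ε i = if ε i = -1 then -1 else 1 := fun i => by
    rcases hε i with h | h <;> simp [h]
  rw [prod_congr rfl fun i _ => hε' i, prod_ite, prod_const, prod_const_one, mul_one,
    neg_one_pow_eq_one_iff_even (by norm_num), ← Set.ncard_coe_finset]
  simp

variable [Nonempty ι]

def minAbs (x : ι → ℝ) : ℝ := univ.inf' univ_nonempty fun i => |x i|

lemma isGreatest_sum_mul_of_prod_eq {a : ι → ℝ} (ha : ∀ i, 0 ≤ a i) {p : ℝ}
    (hp : p = 1 ∨ p = -1) :
    IsGreatest {s | ∃ η : ι → ℝ, (∀ i, η i = 1 ∨ η i = -1) ∧ ∏ i, η i = p ∧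
        s = ∑ i, η i * a i}
      (∑ i, a i - (1 - p) * univ.inf' univ_nonempty a) := by
  classical
  obtain ⟨j, -, hj⟩ := exists_mem_eq_inf' univ_nonempty a
  refine ⟨?_, ?_⟩
  · rcases hp with rfl | rfl
    · exact ⟨1, by simp, by simp, by simp⟩
    · refine ⟨fun i => if i = j then -1 else 1, fun i => by dsimp only; split_ifs <;> simp,
        by simp [prod_ite_eq'], ?_⟩
      have : ∀ i, (if i = j then (-1 : ℝ) else 1) * a i = a i - 2 * if i = j then a i else 0 :=
        fun i => by split_ifs <;> ring
      simp only [this, sum_sub_distrib, ← mul_sum, sum_ite_eq', mem_univ, if_true, ← hj]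
      ring
  · rintro _ ⟨η, hη, hprod, rfl⟩
    have hgap : ∀ i, 0 ≤ (1 - η i) * a i := fun i =>
      mul_nonneg (by rcases hη i with h | h <;> rw [h] <;> norm_num) (ha i)
    have hsum : ∑ i, a i - ∑ i, η i * a i = ∑ i, (1 - η i) * a i := by
      rw [← sum_sub_distrib]; exact sum_congr rfl fun i _ => by ring
    rcases hp with rfl | rfl
    · linarith [sum_nonneg fun i (_ : i ∈ univ) => hgap i]
    · obtain ⟨k, hk⟩ : ∃ k, η k = -1 := by
        by_contra! h
        have : ∏ i, η i = 1 := prod_eq_one fun i _ => (hη i).resolve_right (h i)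
        norm_num [this] at hprod
      have hmin : univ.inf' univ_nonempty a ≤ a k := inf'_le _ (mem_univ k)
      have hk' : (1 - η k) * a k ≤ ∑ i, (1 - η i) * a i :=
        single_le_sum (fun i _ => hgap i) (mem_univ k)
      rw [hk] at hk'
      linarith

lemma isGreatest_sum_mul_of_prod_eq_one (x : ι → ℝ) :
    IsGreatest {s | ∃ ε : ι → ℝ, (∀ i, ε i = 1 ∨ ε i = -1) ∧ ∏ i, ε i = 1 ∧
        s = ∑ i, ε i * x i}
      (∑ i, |x i| - (1 - ∏ i, signVec x i) * minAbs x) := by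
  have hσ : (∏ i, signVec x i) * ∏ i, signVec x i = 1 := by
    rw [← prod_mul_distrib]; exact prod_eq_one fun i _ => signVec_mul_self x i
  -- Multiplying coordinatewise by `signVec x` turns `ε` into `η` with `η i * |x i| = ε i * x i`.
  have hset : {s | ∃ ε : ι → ℝ, (∀ i, ε i = 1 ∨ ε i = -1) ∧ ∏ i, ε i = 1 ∧
        s = ∑ i, ε i * x i} =
      {s | ∃ η : ι → ℝ, (∀ i, η i = 1 ∨ η i = -1) ∧ ∏ i, η i = ∏ i, signVec x i ∧
        s = ∑ i, η i * |x i|} := by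
    ext s
    constructor
    · rintro ⟨ε, hε, hprod, rfl⟩
      refine ⟨fun i => signVec x i * ε i, fun i => sign_mul_sign (signVec_eq x i) (hε i), ?_, ?_⟩
      · rw [prod_mul_distrib, hprod, mul_one]
      · refine sum_congr rfl fun i _ => ?_
        rw [← signVec_mul x i]
        linear_combination (-(ε i * x i)) * signVec_mul_self x i
    · rintro ⟨η, hη, hprod, rfl⟩
      refine ⟨fun i => signVec x i * η i, fun i => sign_mul_sign (signVec_eq x i) (hη i), ?_, ?_⟩
      · rw [prod_mul_distrib, hprod, hσ]
      · refine sum_congr rfl fun i _ => ?_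
        rw [← signVec_mul x i]
        ring
  rw [hset]
  refine isGreatest_sum_mul_of_prod_eq (fun i => abs_nonneg (x i)) ?_
  rcases mul_self_eq_one_iff.mp hσ with h | h <;> simp [h]

lemma minAbs_nonneg (y : ι → ℝ) : 0 ≤ minAbs y := le_inf' _ _ fun i _ => abs_nonneg (y i)

lemma minAbs_le (y : ι → ℝ) (i : ι) : minAbs y ≤ |y i| := inf'_le _ (mem_univ i)

lemma prod_signVec_mul_minAbs_of_neg_at {y y' : ι → ℝ} {j : ι} (hj : y' j = -y j)
    (hne : ∀ i, i ≠ j → y' i = y i) :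
    (∏ i, signVec y' i) * minAbs y' = -((∏ i, signVec y i) * minAbs y) := by
  classical
  have habs : ∀ i, |y' i| = |y i| := fun i => by
    rcases eq_or_ne i j with rfl | hi
    · rw [hj, abs_neg]
    · rw [hne i hi]
  have hmin : minAbs y' = minAbs y := inf'_congr _ rfl fun i _ => habs i
  rw [hmin]
  rcases eq_or_ne (y j) 0 with h0 | h0
  · have : minAbs y = 0 := le_antisymm (by simpa [h0] using minAbs_le y j) (minAbs_nonneg y)
    simp [this]
  · have hsign : ∀ i, signVec y' i = (if i = j then -1 else 1) * signVec y i := fun i => by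
      rcases eq_or_ne i j with rfl | hi
      · simp only [signVec, hj, if_true, neg_lt_zero]
        rcases h0.lt_or_gt with h | h
        · rw [if_neg h.not_gt, if_pos h]; norm_num
        · rw [if_pos h, if_neg h.not_gt]; norm_num
      · simp [signVec, hne i hi, hi]
    rw [prod_congr rfl fun i _ => hsign i, prod_mul_distrib, prod_ite_eq' univ j]
    simp

end SignVectors

section Design

variable {d : ℕ}

lemma mem_design_iff {δ : ℝ} {z : EuclideanSpace ℝ (Fin d)} :
    z ∈ design d δ ↔ ∃ ε : Fin d → ℝ, (∀ i, ε i = 1 ∨ ε i = -1) ∧ ∏ i, ε i = 1 ∧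
      z = WithLp.toLp 2 (fun i => δ * ε i) := by
  refine exists_congr fun ε => and_congr_right fun hε => ?_
  rw [even_ncard_eq_neg_one_iff_prod_eq_one hε, ← (WithLp.ofLp_injective 2).eq_iff]

lemma norm_toLp_sub_smul_sign_sq {ι : Type*} [Fintype ι] (y : ι → ℝ) (δ : ℝ) {ε : ι → ℝ}
    (hε : ∀ i, ε i = 1 ∨ ε i = -1) :
    ‖WithLp.toLp 2 y - WithLp.toLp 2 (fun i => δ * ε i)‖ ^ 2 =
      ∑ i, y i ^ 2 + Fintype.card ι * δ ^ 2 - 2 * δ * ∑ i, ε i * y i := by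
  have hsq : ∀ i, (y i - δ * ε i) ^ 2 = y i ^ 2 + δ ^ 2 - 2 * δ * (ε i * y i) := fun i => by
    rcases hε i with h | h <;> rw [h] <;> ring
  simp only [EuclideanSpace.norm_sq_eq, PiLp.sub_apply, Real.norm_eq_abs, sq_abs, hsq,
    sum_sub_distrib, sum_add_distrib, sum_const, card_univ, nsmul_eq_mul, mul_sum]

lemma iInf_design_norm_sub_sq [NeZero d] {δ : ℝ} (hδ : 0 ≤ δ) (y : Fin d → ℝ) :
    ⨅ z : design d δ, ‖WithLp.toLp 2 y - (z : EuclideanSpace ℝ (Fin d))‖ ^ 2 =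
      ∑ i, y i ^ 2 + d * δ ^ 2 - 2 * δ * (∑ i, |y i| - (1 - ∏ i, signVec y i) * minAbs y) := by
  obtain ⟨⟨ε, hε, hprod, hmax⟩, hle⟩ := isGreatest_sum_mul_of_prod_eq_one y
  have hmem : WithLp.toLp 2 (fun i => δ * ε i) ∈ design d δ :=
    mem_design_iff.mpr ⟨ε, hε, hprod, rfl⟩
  have hbdd : BddBelow (Set.range fun z : design d δ =>
      ‖WithLp.toLp 2 y - (z : EuclideanSpace ℝ (Fin d))‖ ^ 2) :=
    ⟨0, by rintro _ ⟨z, rfl⟩; positivity⟩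
  have : Nonempty (design d δ) := ⟨⟨_, hmem⟩⟩
  apply le_antisymm
  · refine (ciInf_le hbdd ⟨_, hmem⟩).trans_eq ?_
    rw [norm_toLp_sub_smul_sign_sq y δ hε, Fintype.card_fin, ← hmax]
  · refine le_ciInf fun ⟨z, hz⟩ => ?_
    obtain ⟨ε', hε', hprod', rfl⟩ := mem_design_iff.mp hz
    rw [norm_toLp_sub_smul_sign_sq y δ hε', Fintype.card_fin]
    have := mul_le_mul_of_nonneg_left (hle ⟨ε', hε', hprod', rfl⟩) hδ
    linarith

end Design

section UniformCube

open ProbabilityTheory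

abbrev uniformIcc : Measure ℝ := volume[|Set.Icc (-1 : ℝ) 1]

instance : IsProbabilityMeasure uniformIcc :=
  cond_isProbabilityMeasure_of_finite (by simp) (by simp)

lemma integral_uniformIcc (f : ℝ → ℝ) : ∫ s, f s ∂uniformIcc = (∫ s in (-1)..1, f s) / 2 := by
  rw [uniformIcc, ProbabilityTheory.cond, integral_smul_measure, Real.volume_Icc,
    intervalIntegral.integral_of_le (by norm_num), ← integral_Icc_eq_integral_Ioc]
  norm_num
  ring

lemma integrable_uniformIcc {f : ℝ → ℝ} (hf : Continuous f) : Integrable f uniformIcc :=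
  hf.integrableOn_Icc.smul_measure (by simp)

lemma integral_sq_uniformIcc : ∫ s, s ^ 2 ∂uniformIcc = 1 / 3 := by
  rw [integral_uniformIcc, integral_pow]
  norm_num

lemma integral_abs_uniformIcc : ∫ s, |s| ∂uniformIcc = 1 / 2 := by
  have hneg : ∫ s in (-1 : ℝ)..0, |s| = ∫ s in (-1 : ℝ)..0, -s :=
    intervalIntegral.integral_congr fun s hs => by
      rw [Set.uIcc_of_le (by norm_num)] at hs
      exact abs_of_nonpos hs.2
  have hpos : ∫ s in (0 : ℝ)..1, |s| = ∫ s in (0 : ℝ)..1, s :=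
    intervalIntegral.integral_congr fun s hs => by
      rw [Set.uIcc_of_le zero_le_one] at hs
      exact abs_of_nonneg hs.1
  rw [integral_uniformIcc, ← intervalIntegral.integral_add_adjacent_intervals (b := 0)
    (continuous_abs.intervalIntegrable _ _) (continuous_abs.intervalIntegrable _ _), hneg, hpos,
    intervalIntegral.integral_neg, integral_id, integral_id]
  norm_num

lemma integral_sq_sub_two_mul_abs_uniformIcc (δ : ℝ) :
    ∫ s, (s ^ 2 - 2 * δ * |s|) ∂uniformIcc = 1 / 3 - δ := by
  rw [integral_sub (integrable_uniformIcc (by fun_prop))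
      ((integrable_uniformIcc continuous_abs).const_mul _), integral_const_mul,
    integral_sq_uniformIcc, integral_abs_uniformIcc]
  ring

lemma measurePreserving_neg_uniformIcc : MeasurePreserving Neg.neg uniformIcc uniformIcc := by
  refine ⟨measurable_neg, Measure.ext fun s hs => ?_⟩
  rw [Measure.map_apply measurable_neg hs, cond_apply measurableSet_Icc,
    cond_apply measurableSet_Icc, Set.neg_preimage]
  congr 1
  rw [← Measure.measure_neg (μ := volume), Set.inter_neg, neg_neg, Set.neg_Icc, neg_neg]

lemma uniformIcc_real_lt_abs {t : ℝ} (ht : 0 ≤ t) :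
    uniformIcc.real {s | t < |s|} = max (1 - t) 0 := by
  have hset : Set.Icc (-1 : ℝ) 1 ∩ {s | t < |s|} = Set.Ico (-1) (-t) ∪ Set.Ioc t 1 := by
    ext s
    simp only [Set.mem_inter_iff, Set.mem_ofPred_eq, Set.mem_Icc, Set.mem_union,
      Set.mem_Ico, Set.mem_Ioc, lt_abs]
    constructor
    · rintro ⟨⟨h1, h2⟩, h | h⟩
      · exact Or.inr ⟨h, h2⟩
      · exact Or.inl ⟨h1, by linarith⟩
    · rintro (⟨h1, h2⟩ | ⟨h1, h2⟩)
      · exact ⟨⟨h1, by linarith⟩, Or.inr (by linarith)⟩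
      · exact ⟨⟨by linarith, h2⟩, Or.inl h1⟩
  have hdisj : Disjoint (Set.Ico (-1 : ℝ) (-t)) (Set.Ioc t 1) :=
    Set.disjoint_left.mpr fun s h1 h2 => by linarith [h1.2, h2.1]
  rw [measureReal_def, cond_apply measurableSet_Icc, hset, measure_union hdisj measurableSet_Ioc,
    Real.volume_Icc, Real.volume_Ico, Real.volume_Ioc, ENNReal.toReal_mul,
    ENNReal.toReal_add ENNReal.ofReal_ne_top ENNReal.ofReal_ne_top, ENNReal.toReal_inv]
  simp only [ENNReal.toReal_ofReal', sub_neg_eq_add]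
  rw [show -t + 1 = 1 - t by ring]
  norm_num
  ring

abbrev uniformCube (ι : Type*) [Fintype ι] : Measure (ι → ℝ) := Measure.pi fun _ => uniformIcc

variable {ι : Type*} [Fintype ι]

lemma uniformCube_eq_smul_restrict :
    uniformCube ι = (2 ^ Fintype.card ι : ENNReal)⁻¹ •
      (volume : Measure (ι → ℝ)).restrict (Set.univ.pi fun _ => Set.Icc (-1) 1) := by
  refine Measure.pi_eq fun s hs => ?_
  rw [Measure.smul_apply, Measure.restrict_apply (MeasurableSet.univ_pi hs),
    ← Set.pi_inter_distrib, volume_pi_pi, smul_eq_mul, ENNReal.inv_pow, ← Finset.card_univ,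
    ← prod_const, ← prod_mul_distrib]
  refine prod_congr rfl fun i _ => ?_
  rw [cond_apply measurableSet_Icc, Real.volume_Icc, Set.inter_comm]
  norm_num

lemma measurable_prod_signVec : Measurable fun y : ι → ℝ => ∏ i, signVec y i :=
  Finset.measurable_prod _ fun i _ =>
    Measurable.ite (measurableSet_lt (measurable_pi_apply i) measurable_const)
      measurable_const measurable_const

variable [Nonempty ι]

lemma measurable_minAbs : Measurable (minAbs : (ι → ℝ) → ℝ) := by
  have : Measurable (univ.inf' univ_nonempty fun i (y : ι → ℝ) => |y i|) :=
    Finset.inf'_induction _ _ (fun _ hf _ hg => hf.inf hg) fun i _ => (measurable_pi_apply i).abs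
  convert this using 1
  ext y
  simp [minAbs, Finset.inf'_apply]

lemma integrable_minAbs : Integrable minAbs (uniformCube ι) := by
  obtain ⟨j⟩ := ‹Nonempty ι›
  refine Integrable.mono' (integrable_comp_eval (i := j) (integrable_uniformIcc continuous_abs))
    measurable_minAbs.aestronglyMeasurable (ae_of_all _ fun y => ?_)
  rw [Real.norm_eq_abs, abs_of_nonneg (minAbs_nonneg y)]
  exact minAbs_le y j

lemma integrable_prod_signVec_mul_minAbs :
    Integrable (fun y : ι → ℝ => (∏ i, signVec y i) * minAbs y) (uniformCube ι) := by
  refine integrable_minAbs.mono'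
    (measurable_prod_signVec.mul measurable_minAbs).aestronglyMeasurable (ae_of_all _ fun y => ?_)
  rw [Real.norm_eq_abs, abs_mul, abs_prod, abs_of_nonneg (minAbs_nonneg y)]
  refine mul_le_of_le_one_left (minAbs_nonneg y)
    (prod_le_one (fun i _ => abs_nonneg _) fun i _ => ?_)
  rcases signVec_eq y i with h | h <;> simp [h]

lemma uniformCube_real_lt_minAbs {t : ℝ} (ht : 0 ≤ t) :
    (uniformCube ι).real {y | t < minAbs y} = max (1 - t) 0 ^ Fintype.card ι := by
  have hset : {y : ι → ℝ | t < minAbs y} = Set.univ.pi fun _ => {s | t < |s|} := by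
    ext y
    simp [minAbs, lt_inf'_iff]
  rw [hset, measureReal_def, Measure.pi_pi, ENNReal.toReal_prod, prod_const, card_univ,
    ← measureReal_def, uniformIcc_real_lt_abs ht]

lemma integral_minAbs : ∫ y, minAbs y ∂uniformCube ι = 1 / (Fintype.card ι + 1) := by
  rw [integrable_minAbs.integral_eq_integral_meas_lt (ae_of_all _ minAbs_nonneg),
    setIntegral_congr_fun measurableSet_Ioi fun t ht => uniformCube_real_lt_minAbs (le_of_lt ht),
    setIntegral_eq_of_subset_of_forall_sdiff_eq_zero measurableSet_Ioi Set.Ioc_subset_Ioi_self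
      fun t ht => ?_, ← intervalIntegral.integral_of_le zero_le_one]
  · have hcongr : ∫ t in (0 : ℝ)..1, max (1 - t) 0 ^ Fintype.card ι =
        ∫ t in (0 : ℝ)..1, (1 - t) ^ Fintype.card ι :=
      intervalIntegral.integral_congr fun t ht => by
        rw [Set.uIcc_of_le zero_le_one] at ht
        rw [max_eq_left (by linarith [ht.2])]
    rw [hcongr, intervalIntegral.integral_comp_sub_left (fun t => t ^ Fintype.card ι)]
    norm_num
  · have : 1 < t := lt_of_not_ge fun h => ht.2 ⟨ht.1, h⟩
    rw [max_eq_right (by linarith), zero_pow Fintype.card_ne_zero]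

lemma integral_prod_signVec_mul_minAbs :
    ∫ y, (∏ i, signVec y i) * minAbs y ∂uniformCube ι = 0 := by
  classical
  obtain ⟨j⟩ := ‹Nonempty ι›
  set negAt : ι → ℝ → ℝ := fun i s => if i = j then -s else s
  have hmp : MeasurePreserving (fun y : ι → ℝ => fun i => negAt i (y i))
      (uniformCube ι) (uniformCube ι) :=
    measurePreserving_pi _ _ fun i => by
      by_cases hi : i = j
      · rw [show negAt i = Neg.neg from funext fun s => if_pos hi]
        exact measurePreserving_neg_uniformIcc
      · rw [show negAt i = id from funext fun s => if_neg hi]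
        exact MeasurePreserving.id _
  have hinv : Function.Involutive fun y : ι → ℝ => fun i => negAt i (y i) := fun y => by
    ext i; by_cases hi : i = j <;> simp [negAt, hi]
  have hodd : ∀ y : ι → ℝ, (∏ i, signVec (fun i => negAt i (y i)) i) *
      minAbs (fun i => negAt i (y i)) = -((∏ i, signVec y i) * minAbs y) := fun y =>
    prod_signVec_mul_minAbs_of_neg_at (if_pos rfl) fun i hi => if_neg hi
  have h := hmp.integral_comp
    (MeasurableEquiv.ofInvolutive _ hinv hmp.measurable).measurableEmbedding
    fun y => (∏ i, signVec y i) * minAbs y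
  simp only [hodd, integral_neg] at h
  linarith

lemma integral_quantization_integrand (δ : ℝ) :
    ∫ y, (∑ i, y i ^ 2 + Fintype.card ι * δ ^ 2 -
        2 * δ * (∑ i, |y i| - (1 - ∏ i, signVec y i) * minAbs y)) ∂uniformCube ι =
      Fintype.card ι * δ ^ 2 - Fintype.card ι * δ + Fintype.card ι / 3 +
        2 * δ / (Fintype.card ι + 1) := by
  have hcoord : Integrable (fun s : ℝ => s ^ 2 - 2 * δ * |s|) uniformIcc :=
    integrable_uniformIcc (by fun_prop)
  have hcoord' : ∀ i, Integrable (fun y : ι → ℝ => y i ^ 2 - 2 * δ * |y i|) (uniformCube ι) :=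
    fun i => integrable_comp_eval (X := fun _ => ℝ) (μ := fun _ => uniformIcc) (i := i) hcoord
  have hsum : Integrable (fun y : ι → ℝ => ∑ i, (y i ^ 2 - 2 * δ * |y i|)) (uniformCube ι) :=
    integrable_finsetSum _ fun i _ => hcoord' i
  have hexpand : ∀ y : ι → ℝ, ∑ i, y i ^ 2 + Fintype.card ι * δ ^ 2 -
      2 * δ * (∑ i, |y i| - (1 - ∏ i, signVec y i) * minAbs y) =
      ∑ i, (y i ^ 2 - 2 * δ * |y i|) + Fintype.card ι * δ ^ 2 + 2 * δ * minAbs y -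
        2 * δ * ((∏ i, signVec y i) * minAbs y) := fun y => by
    rw [sum_sub_distrib, ← mul_sum]; ring
  have hconst : Integrable (fun y : ι → ℝ => ∑ i, (y i ^ 2 - 2 * δ * |y i|) +
      Fintype.card ι * δ ^ 2) (uniformCube ι) := hsum.add (integrable_const _)
  have hmin : Integrable (fun y : ι → ℝ => ∑ i, (y i ^ 2 - 2 * δ * |y i|) +
      Fintype.card ι * δ ^ 2 + 2 * δ * minAbs y) (uniformCube ι) :=
    hconst.add (integrable_minAbs.const_mul _)
  simp_rw [hexpand]
  rw [integral_sub hmin (integrable_prod_signVec_mul_minAbs.const_mul _),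
    integral_add hconst (integrable_minAbs.const_mul _),
    integral_add hsum (integrable_const _), integral_finsetSum _ fun i _ => hcoord' i,
    integral_const, integral_const_mul, integral_const_mul, integral_minAbs,
    integral_prod_signVec_mul_minAbs]
  simp_rw [integral_comp_eval (X := fun _ => ℝ) (μ := fun _ => uniformIcc)
    hcoord.aestronglyMeasurable]
  rw [integral_sq_sub_two_mul_abs_uniformIcc]
  simp only [sum_sub_distrib, sum_const, card_univ, nsmul_eq_mul, probReal_univ, smul_eq_mul,
    one_mul, mul_zero, sub_zero]
  ring

end UniformCube

lemma quantErr_eq_integral_uniformCube {d : ℕ} (Z : Set (EuclideanSpace ℝ (Fin d))) :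
    quantErr d Z =
      ∫ y, ⨅ z : Z, ‖WithLp.toLp 2 y - (z : EuclideanSpace ℝ (Fin d))‖ ^ 2
        ∂uniformCube (Fin d) := by
  have hemb : MeasurableEmbedding (WithLp.toLp 2 : (Fin d → ℝ) → EuclideanSpace ℝ (Fin d)) :=
    (MeasurableEquiv.toLp 2 (Fin d → ℝ)).measurableEmbedding
  rw [quantErr, ← (PiLp.volume_preserving_toLp (Fin d)).setIntegral_preimage_emb hemb,
    uniformCube_eq_smul_restrict, integral_smul_measure]
  have hpre : WithLp.toLp 2 ⁻¹' cube d = Set.univ.pi fun _ : Fin d => Set.Icc (-1 : ℝ) 1 := by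
    ext y; simp only [cube, Set.mem_preimage, Set.mem_ofPred_eq, Set.mem_univ_pi]
  simp [hpre, div_eq_inv_mul]

lemma quantErr_design {d : ℕ} [NeZero d] {δ : ℝ} (hδ : 0 ≤ δ) :
    quantErr d (design d δ) = d * δ ^ 2 - d * δ + d / 3 + 2 * δ / (d + 1) := by
  simp_rw [quantErr_eq_integral_uniformCube, iInf_design_norm_sub_sq hδ]
  simpa using integral_quantization_integrand (ι := Fin d) δ

lemma natCast_two_pow_pred_rpow {d : ℕ} (hd : d ≠ 0) :
    ((2 ^ (d - 1) : ℕ) : ℝ) ^ ((2 : ℝ) / d) = 4 * (2 : ℝ) ^ (-(2 : ℝ) / d) := by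
  have hexp : ((d - 1 : ℕ) : ℝ) * (2 / d) = 2 + -2 / d := by
    rw [Nat.cast_sub (Nat.one_le_iff_ne_zero.mpr hd)]
    field_simp
    ring
  rw [Nat.cast_pow, Nat.cast_ofNat, ← Real.rpow_natCast, ← Real.rpow_mul zero_le_two, hexp,
    Real.rpow_add zero_lt_two]
  norm_num

theorem stmt4_general (d : ℕ) (hd : 2 ≤ d) (δ : ℝ) (hδ0 : 0 < δ) (n : ℕ)
    (hn : n = 2 ^ (d - 1)) :
    (n : ℝ) ^ ((2 : ℝ) / d) * quantErr d (design d δ) / (4 * d) =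
      (2 : ℝ) ^ (-(2 : ℝ) / d) * (δ ^ 2 - δ + 1 / 3 + 2 * δ / (d * (d + 1))) := by
  have hd0 : d ≠ 0 := by omega
  have : NeZero d := ⟨hd0⟩
  rw [hn, natCast_two_pow_pred_rpow hd0, quantErr_design hδ0.le]
  field_simp

theorem stmt4 (d : ℕ) (hd : 2 ≤ d) (δ : ℝ) (hδ0 : 0 < δ) (hδ1 : δ ≤ 1) (n : ℕ)
    (hn : n = 2 ^ (d - 1)) :
    (n : ℝ) ^ ((2 : ℝ) / d) * quantErr d (design d δ) / (4 * d) =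
      (2 : ℝ) ^ (-(2 : ℝ) / d) * (δ ^ 2 - δ + 1 / 3 + 2 * δ / (d * (d + 1))) :=
  stmt4_general d hd δ hδ0 n hn

end
end

section
/- Let d ≥ 2, 0 < δ ≤ 1 and r ≥ 0. Then C_d(D(d,δ), r) = (1/2)·vol(V ∩ B(δ·1, r)), where V = C_0 ∪ ⋃_{j=1}^d U_j and B(δ·1,r) is the closed Euclidean ball of radius r centred at δ·1. -/
open MeasureTheory Filter

noncomputable section

/-!
The group `G` of sign changes with an even number of `-1`'s acts on the cube by isometries, and
the design is the `G`-orbit of `δ·1`, so the union of balls is `G`-invariant. `V` is a fundamental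
domain for `G` on the cube: every point of the cube can be moved into `V`, and for a generic point
(nonzero coordinates with distinct absolute values) the image is unique, because the product of
the coordinates is `G`-invariant, positive on `C_0` and negative on each `U_j`. Hence the covered
volume is `|G| = 2^(d-1)` times the covered volume inside `V`. Finally, `δ·1` is the design point
nearest to every point of `V` (moving from `δ·1` to `g·δ·1` changes the squared distance from `x`
by `4δ` times a sum of an even number of coordinates of `x`, which is nonnegative on `V`), so
inside `V` the union of balls is just `B(δ·1, r)`.
-/

open Metric Pointwise Finset

lemma MeasureTheory.Measure.ae_linearMap_ne_zero {E : Type*} [NormedAddCommGroup E]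
    [NormedSpace ℝ E] [MeasurableSpace E] [BorelSpace E] [FiniteDimensional ℝ E] (μ : Measure E)
    [μ.IsAddHaarMeasure] (f : E →ₗ[ℝ] ℝ) {v : E} (hv : f v ≠ 0) : ∀ᵐ x ∂μ, f x ≠ 0 := by
  have hker : LinearMap.ker f ≠ ⊤ := fun htop => hv (by simp [LinearMap.ker_eq_top.1 htop])
  simp_rw [ae_iff, not_not]
  exact Measure.addHaar_submodule μ _ hker

instance Subgroup.isIsometricSMul {G X : Type*} [Group G] [MulAction G X] [PseudoEMetricSpace X]
    [IsIsometricSMul G X] (H : Subgroup G) : IsIsometricSMul H X :=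
  ⟨fun h => isometry_smul X (h : G)⟩

lemma smul_iUnion_closedBall_orbit {G X : Type*} [Group G] [PseudoMetricSpace X] [MulAction G X]
    [IsIsometricSMul G X] (g : G) (c : X) (r : ℝ) :
    g • ⋃ h : G, closedBall (h • c) r = ⋃ h : G, closedBall (h • c) r := by
  simp_rw [Set.smul_set_iUnion, Metric.smul_closedBall, smul_smul]
  exact (mul_left_surjective g).iUnion_comp fun h => closedBall (h • c) r

lemma eq_of_abs_eq_of_neg_iff {a b : ℝ} (habs : |a| = |b|) (hneg : a < 0 ↔ b < 0) : a = b := by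
  rcases abs_eq_abs.1 habs with h | h
  · exact h
  · subst h
    rcases lt_trichotomy b 0 with hb | rfl | hb
    · linarith [hneg.2 hb]
    · simp
    · linarith [hneg.1 (by linarith)]

section Signs

variable {ι : Type*}

namespace EuclideanSpace

lemma units_smul_apply (ε : ι → ℤˣ) (x : EuclideanSpace ℝ ι) (i : ι) :
    (ε • x) i = ((ε i : ℤ) : ℝ) * x i := by
  simp [Units.smul_def, zsmul_eq_mul]

lemma abs_units_smul_apply (ε : ι → ℤˣ) (x : EuclideanSpace ℝ ι) (i : ι) :
    |(ε • x) i| = |x i| := by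
  rcases Int.units_eq_one_or (ε i) with h | h <;> simp [units_smul_apply, h]

variable [Fintype ι]

lemma prod_units_smul_apply (ε : ι → ℤˣ) (x : EuclideanSpace ℝ ι) :
    ∏ i, (ε • x) i = ((∏ i, ε i : ℤˣ) : ℤ) * ∏ i, x i := by
  simp [units_smul_apply, Finset.prod_mul_distrib]

def unitsSMulIsometry (ε : ι → ℤˣ) : EuclideanSpace ℝ ι ≃ₗᵢ[ℝ] EuclideanSpace ℝ ι where
  toFun x := ε • x
  invFun x := ε⁻¹ • x
  map_add' := smul_add ε
  map_smul' c x := by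
    ext i
    simp only [units_smul_apply, PiLp.smul_apply, smul_eq_mul, RingHom.id_apply]
    ring
  left_inv := inv_smul_smul ε
  right_inv := smul_inv_smul ε
  norm_map' x := by simp [EuclideanSpace.norm_eq, ← sq_abs (_ : ℝ)]

lemma ae_ne_zero_and_abs_injective :
    ∀ᵐ x : EuclideanSpace ℝ ι, (∀ i, x i ≠ 0) ∧ Function.Injective fun i => |x i| := by
  classical
  let p (i : ι) : EuclideanSpace ℝ ι →ₗ[ℝ] ℝ := (EuclideanSpace.proj i : _ →L[ℝ] ℝ)
  have hp (i : ι) (x : EuclideanSpace ℝ ι) : p i x = x i := rfl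
  refine Filter.eventually_and.2 ⟨ae_all_iff.2 fun i => ?_, ?_⟩
  · simpa [hp] using Measure.ae_linearMap_ne_zero volume (p i) (v := single i 1) (by simp [hp])
  refine ae_all_iff.2 fun i => ae_all_iff.2 fun k => ?_
  rcases eq_or_ne i k with rfl | hik
  · exact Filter.Eventually.of_forall fun _ _ => rfl
  have hsub := Measure.ae_linearMap_ne_zero volume (p i - p k) (v := single i 1)
    (by simp [hp, hik.symm])
  have hadd := Measure.ae_linearMap_ne_zero volume (p i + p k) (v := single i 1)
    (by simp [hp, hik.symm])
  filter_upwards [hsub, hadd] with x hx₁ hx₂ habs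
  simp only [LinearMap.sub_apply, LinearMap.add_apply, hp, sub_ne_zero] at hx₁ hx₂
  rcases abs_eq_abs.1 habs with h | h
  · exact absurd h hx₁
  · exact absurd (by linarith) hx₂

end EuclideanSpace

variable [Fintype ι]

instance : IsIsometricSMul (ι → ℤˣ) (EuclideanSpace ℝ ι) :=
  ⟨fun ε => (EuclideanSpace.unitsSMulIsometry ε).isometry⟩

instance : SMulInvariantMeasure (ι → ℤˣ) (EuclideanSpace ℝ ι) volume :=
  ⟨fun ε _ hs => (EuclideanSpace.unitsSMulIsometry ε).measurePreserving.measure_preimage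
    hs.nullMeasurableSet⟩

def signProd (ι : Type*) [Fintype ι] : (ι → ℤˣ) →* ℤˣ where
  toFun ε := ∏ i, ε i
  map_one' := Finset.prod_const_one
  map_mul' _ _ := Finset.prod_mul_distrib

def evenSigns (ι : Type*) [Fintype ι] : Subgroup (ι → ℤˣ) := (signProd ι).ker

lemma mem_evenSigns {ε : ι → ℤˣ} : ε ∈ evenSigns ι ↔ ∏ i, ε i = 1 := Iff.rfl

lemma signProd_surjective [Nonempty ι] : Function.Surjective (signProd ι) := by
  classical
  intro u
  obtain ⟨i⟩ := ‹Nonempty ι›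
  exact ⟨Pi.mulSingle i u, by simp [signProd]⟩

lemma card_evenSigns_mul_two [Nonempty ι] :
    Nat.card (evenSigns ι) * 2 = 2 ^ Fintype.card ι := by
  have hindex : (evenSigns ι).index = 2 := by
    rw [evenSigns, Subgroup.index_ker, MonoidHom.range_eq_top.mpr signProd_surjective,
      Subgroup.card_top, Nat.card_eq_fintype_card, Fintype.card_units_int]
  calc Nat.card (evenSigns ι) * 2 = Nat.card (ι → ℤˣ) := by
        rw [← hindex, Subgroup.card_mul_index]
    _ = 2 ^ Fintype.card ι := by simp [Nat.card_fun, Nat.card_eq_fintype_card]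

lemma prod_eq_one_iff_even_card (ε : ι → ℤˣ) :
    ∏ i, ε i = 1 ↔ Even #{i | ε i = -1} := by
  classical
  have h : ∏ i, ε i = ∏ i, if ε i = -1 then -1 else 1 :=
    Finset.prod_congr rfl fun i _ => by rcases Int.units_eq_one_or (ε i) with h | h <;> simp [h]
  rw [h, Finset.prod_ite, Finset.prod_const_one, mul_one, Finset.prod_const,
    neg_one_pow_eq_one_iff_even (by decide)]

end Signs

def V (d : ℕ) : Set (EuclideanSpace ℝ (Fin d)) := C0 d ∪ ⋃ j, U d j

variable {d : ℕ}

lemma mem_cube_iff_abs_le {x : EuclideanSpace ℝ (Fin d)} : x ∈ cube d ↔ ∀ i, |x i| ≤ 1 := by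
  simp [cube, abs_le]

lemma units_smul_mem_cube_iff (ε : Fin d → ℤˣ) {x : EuclideanSpace ℝ (Fin d)} :
    ε • x ∈ cube d ↔ x ∈ cube d := by
  simp only [mem_cube_iff_abs_le, EuclideanSpace.abs_units_smul_apply]

lemma isClosed_cube : IsClosed (cube d) := by
  simp only [cube, Set.ofPred_forall]
  exact isClosed_iInter fun i => isClosed_Icc.preimage (by fun_prop)

lemma isClosed_C0 : IsClosed (C0 d) := by
  simp only [C0, Set.ofPred_forall]
  exact isClosed_iInter fun i => isClosed_Icc.preimage (by fun_prop)

lemma isClosed_U (j : Fin d) : IsClosed (U d j) := by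
  have hc (i : Fin d) : Continuous fun x : EuclideanSpace ℝ (Fin d) => x i := by fun_prop
  simp only [U, Set.ofPred_and, Set.ofPred_forall]
  exact (isClosed_le continuous_const (hc j)).inter ((isClosed_le (hc j) continuous_const).inter
    (isClosed_iInter fun k => isClosed_iInter fun _ =>
      (isClosed_le (hc j).abs (hc k)).inter (isClosed_le (hc k) continuous_const)))

lemma isClosed_V : IsClosed (V d) :=
  isClosed_C0.union (isClosed_iUnion_of_finite isClosed_U)

lemma V_subset_cube : V d ⊆ cube d := by
  rintro x (hx | hx) i
  · exact ⟨by linarith [(hx i).1], (hx i).2⟩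
  obtain ⟨j, hj⟩ := Set.mem_iUnion.1 hx
  rcases eq_or_ne i j with rfl | hij
  · exact ⟨hj.1, hj.2.1.trans zero_le_one⟩
  · exact ⟨by linarith [abs_nonneg (x j), (hj.2.2 i hij).1], (hj.2.2 i hij).2⟩

instance : SMulInvariantMeasure (Fin d → ℤˣ) (EuclideanSpace ℝ (Fin d))
    (volume.restrict (cube d)) :=
  ⟨fun ε s _ => by
    have hcube : (ε • ·) ⁻¹' cube d = cube d := Set.ext fun _ => units_smul_mem_cube_iff ε
    rw [Measure.restrict_apply' isClosed_cube.measurableSet,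
      Measure.restrict_apply' isClosed_cube.measurableSet,
      ← measure_preimage_smul (μ := volume) ε (s ∩ cube d), Set.preimage_inter, hcube]⟩

lemma exists_evenSigns_smul_mem_V [NeZero d] {x : EuclideanSpace ℝ (Fin d)} (hx : x ∈ cube d) :
    ∃ g ∈ evenSigns (Fin d), g • x ∈ V d := by
  classical
  have hx1 := mem_cube_iff_abs_le.1 hx
  set σ : Fin d → ℤˣ := fun i => if x i < 0 then -1 else 1
  have hσ (i : Fin d) : (σ • x) i = |x i| := by
    by_cases h : x i < 0
    · simp [σ, EuclideanSpace.units_smul_apply, h, abs_of_neg h]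
    · simp [σ, EuclideanSpace.units_smul_apply, h, abs_of_nonneg (not_lt.1 h)]
  by_cases hprod : ∏ i, σ i = 1
  · exact ⟨σ, hprod, Or.inl fun i => by simpa [hσ] using hx1 i⟩
  obtain ⟨j, -, hj⟩ := Finset.exists_min_image univ (fun i => |x i|) univ_nonempty
  refine ⟨Pi.mulSingle j (-1) * σ, ?_, Or.inr (Set.mem_iUnion.2 ⟨j, ?_⟩)⟩
  · rw [mem_evenSigns, Pi.mul_def, Finset.prod_mul_distrib, Finset.prod_pi_mulSingle',
      if_pos (mem_univ j), (Int.units_eq_one_or _).resolve_left hprod, neg_mul_neg, one_mul]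
  have happly (i : Fin d) :
      ((Pi.mulSingle j (-1) * σ) • x) i = if i = j then -|x i| else |x i| := by
    rw [mul_smul, EuclideanSpace.units_smul_apply, hσ]
    by_cases h : i = j <;> simp [h]
  refine ⟨?_, ?_, fun k hk => ?_⟩
  · rw [happly, if_pos rfl]; linarith [hx1 j]
  · rw [happly, if_pos rfl]; linarith [abs_nonneg (x j)]
  rw [happly, happly, if_pos rfl, if_neg hk, abs_neg, abs_abs]
  exact ⟨hj k (mem_univ k), hx1 k⟩

section Generic

variable {y z : EuclideanSpace ℝ (Fin d)} (h0 : ∀ i, y i ≠ 0)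
  (hinj : Function.Injective fun i => |y i|)
include h0 hinj

lemma neg_iff_of_mem_V (hy : y ∈ V d) (i : Fin d) :
    y i < 0 ↔ ∏ k, y k < 0 ∧ ∀ k, |y i| ≤ |y k| := by
  rcases hy with hC | hU
  · have hprod : 0 ≤ ∏ k, y k := prod_nonneg fun k _ => (hC k).1
    simp only [not_lt.2 (hC i).1, false_iff, not_and, not_lt.2 hprod, false_imp_iff]
  obtain ⟨j, hj⟩ := Set.mem_iUnion.1 hU
  have hyj : y j < 0 := lt_of_le_of_ne hj.2.1 (h0 j)
  have hpos (k : Fin d) (hk : k ≠ j) : 0 < y k :=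
    lt_of_le_of_ne ((abs_nonneg _).trans (hj.2.2 k hk).1) (h0 k).symm
  have hprod : ∏ k, y k < 0 := by
    rw [← mul_prod_erase univ _ (mem_univ j)]
    exact mul_neg_of_neg_of_pos hyj (prod_pos fun k hk => hpos k (ne_of_mem_erase hk))
  rcases eq_or_ne i j with rfl | hij
  · refine iff_of_true hyj ⟨hprod, fun k => ?_⟩
    rcases eq_or_ne k i with rfl | hki
    · exact le_rfl
    · exact (hj.2.2 k hki).1.trans (le_abs_self _)
  refine iff_of_false (not_lt.2 (hpos i hij).le) fun ⟨_, hmin⟩ => hij (hinj ?_)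
  exact le_antisymm (hmin j) ((hj.2.2 i hij).1.trans (le_abs_self _))

lemma eq_of_mem_V (hy : y ∈ V d) (hz : z ∈ V d) (habs : ∀ i, |z i| = |y i|)
    (hprod : ∏ i, z i = ∏ i, y i) : z = y := by
  have hz0 (i : Fin d) : z i ≠ 0 := abs_ne_zero.1 (habs i ▸ abs_ne_zero.2 (h0 i))
  have hzinj : Function.Injective fun i => |z i| := by simpa only [habs] using hinj
  ext i
  refine eq_of_abs_eq_of_neg_iff (habs i) ?_
  rw [neg_iff_of_mem_V hz0 hzinj hz, neg_iff_of_mem_V h0 hinj hy, hprod]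
  simp only [habs]

lemma eq_one_of_smul_mem_V {g : Fin d → ℤˣ} (hg : g ∈ evenSigns (Fin d)) (hy : y ∈ V d)
    (hgy : g • y ∈ V d) : g = 1 := by
  have hfix : g • y = y := eq_of_mem_V h0 hinj hy hgy (EuclideanSpace.abs_units_smul_apply g y)
    (by rw [EuclideanSpace.prod_units_smul_apply, mem_evenSigns.1 hg]; simp)
  funext i
  have hi := congrArg (· i) hfix
  simp only [EuclideanSpace.units_smul_apply] at hi
  rcases Int.units_eq_one_or (g i) with h | h
  · exact h
  · simp only [h, Units.val_neg, Units.val_one, Int.cast_neg, Int.cast_one, neg_mul, one_mul]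
      at hi
    exact absurd (by linarith) (h0 i)

end Generic

lemma isFundamentalDomain_V [NeZero d] :
    IsFundamentalDomain (evenSigns (Fin d)) (V d) (volume.restrict (cube d)) := by
  refine .mk'' isClosed_V.measurableSet.nullMeasurableSet ?_ (fun g hg => ?_)
    fun g => (measurePreserving_smul g _).quasiMeasurePreserving
  · refine (ae_restrict_iff' isClosed_cube.measurableSet).2 (Filter.Eventually.of_forall ?_)
    intro x hx
    obtain ⟨g, hg, hgx⟩ := exists_evenSigns_smul_mem_V hx
    exact ⟨⟨g, hg⟩, hgx⟩
  refine measure_eq_zero_iff_ae_notMem.2 ?_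
  filter_upwards [ae_restrict_of_ae EuclideanSpace.ae_ne_zero_and_abs_injective]
    with x ⟨h0, hinj⟩ ⟨hxg, hxV⟩
  rw [Set.mem_smul_set_iff_inv_smul_mem] at hxg
  exact hg (inv_eq_one.1 (Subtype.ext (eq_one_of_smul_mem_V h0 hinj (g⁻¹).2 hxV hxg)))

lemma sum_nonneg_of_mem_V {x : EuclideanSpace ℝ (Fin d)} (hx : x ∈ V d) {S : Finset (Fin d)}
    (hS : Even #S) : 0 ≤ ∑ i ∈ S, x i := by
  rcases hx with hC | hU
  · exact sum_nonneg fun i _ => (hC i).1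
  obtain ⟨j, hj⟩ := Set.mem_iUnion.1 hU
  have hterm (i : Fin d) : |x j| - (if i = j then 2 * |x j| else 0) ≤ x i := by
    rcases eq_or_ne i j with rfl | hij
    · rw [if_pos rfl, abs_of_nonpos hj.2.1]; linarith
    · rw [if_neg hij]; linarith [(hj.2.2 i hij).1]
  calc 0 ≤ #S * |x j| - if j ∈ S then 2 * |x j| else 0 := by
        split_ifs with hjS
        · have h2 : (2 : ℝ) ≤ #S := by
            have := card_pos.2 ⟨j, hjS⟩
            exact_mod_cast (by rw [Nat.even_iff] at hS; omega : 2 ≤ #S)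
          nlinarith [abs_nonneg (x j)]
        · simp only [sub_zero]; positivity
    _ = ∑ i ∈ S, (|x j| - if i = j then 2 * |x j| else 0) := by
        rw [sum_sub_distrib, sum_const, nsmul_eq_mul, sum_ite_eq']
    _ ≤ ∑ i ∈ S, x i := sum_le_sum fun i _ => hterm i

lemma dist_const_le_dist_smul_const {δ : ℝ} (hδ : 0 ≤ δ) {x : EuclideanSpace ℝ (Fin d)}
    (hx : x ∈ V d) {g : Fin d → ℤˣ} (hg : g ∈ evenSigns (Fin d)) :
    dist x (const d δ) ≤ dist x (g • const d δ) := by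
  classical
  have hsq (i : Fin d) : (x i - (g • const d δ) i) ^ 2 =
      (x i - const d δ i) ^ 2 + if g i = -1 then 4 * δ * x i else 0 := by
    rcases Int.units_eq_one_or (g i) with h | h
    · simp [EuclideanSpace.units_smul_apply, h, const]
    · simp [EuclideanSpace.units_smul_apply, h, const]
      ring
  rw [EuclideanSpace.dist_eq, EuclideanSpace.dist_eq]
  refine Real.sqrt_le_sqrt ?_
  simp only [Real.dist_eq, sq_abs, hsq, sum_add_distrib, ← sum_filter, ← mul_sum]
  have := sum_nonneg_of_mem_V hx ((prod_eq_one_iff_even_card g).1 hg)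
  nlinarith

lemma iUnion_closedBall_orbit_inter_V {δ : ℝ} (hδ : 0 ≤ δ) (r : ℝ) :
    (⋃ g : evenSigns (Fin d), closedBall (g • const d δ) r) ∩ V d =
      closedBall (const d δ) r ∩ V d := by
  ext x
  simp only [Set.mem_inter_iff, Set.mem_iUnion, mem_closedBall]
  constructor
  · rintro ⟨⟨g, hx⟩, hxV⟩
    exact ⟨(dist_const_le_dist_smul_const hδ hxV g.2).trans hx, hxV⟩
  · rintro ⟨hx, hxV⟩
    exact ⟨⟨1, by rwa [one_smul]⟩, hxV⟩

lemma design_eq_orbit (δ : ℝ) :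
    design d δ = MulAction.orbit (evenSigns (Fin d)) (const d δ) := by
  classical
  ext z
  constructor
  · rintro ⟨ε, hε, heven, hz⟩
    set g : Fin d → ℤˣ := fun i => if ε i = -1 then -1 else 1
    have hg (i : Fin d) : ((g i : ℤ) : ℝ) = ε i := by
      rcases hε i with h | h <;> norm_num [g, h]
    refine ⟨⟨g, mem_evenSigns.2 ((prod_eq_one_iff_even_card g).2 ?_)⟩, ?_⟩
    · rw [Set.ncard_eq_toFinset_card', Set.toFinset_ofPred] at heven
      convert heven using 3 with i
      simp [g]
    · ext i
      change (g • const d δ) i = z i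
      rw [EuclideanSpace.units_smul_apply, hg, congrFun hz i]
      simp [const, mul_comm]
  · rintro ⟨⟨g, hg⟩, rfl⟩
    refine ⟨fun i => ((g i : ℤ) : ℝ), fun i => ?_, ?_, ?_⟩
    · rcases Int.units_eq_one_or (g i) with h | h <;> simp [h]
    · have hset : {i | ((g i : ℤ) : ℝ) = -1} = ↑({i | g i = -1} : Finset (Fin d)) := by
        ext i
        rcases Int.units_eq_one_or (g i) with h | h <;> norm_num [h]
      rw [hset, Set.ncard_coe_finset]
      exact (prod_eq_one_iff_even_card g).1 hg
    · funext i
      simp [Subgroup.smul_def, EuclideanSpace.units_smul_apply, const, mul_comm]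

theorem stmt8_general (d : ℕ) (hd : 2 ≤ d) (δ r : ℝ) (hδ0 : 0 < δ) :
    cover d (design d δ) r =
      (1 / 2) *
        (volume ((C0 d ∪ ⋃ j, U d j) ∩ Metric.closedBall (const d δ) r)).toReal := by
  change _ = 1 / 2 * (volume (V d ∩ closedBall (const d δ) r)).toReal
  have : NeZero d := ⟨by omega⟩
  set t := ⋃ g : evenSigns (Fin d), closedBall (g • const d δ) r
  have hunion : ⋃ z ∈ design d δ, closedBall z r = t := by
    rw [design_eq_orbit]
    exact Set.biUnion_range
  have hcount := isFundamentalDomain_V.measure_eq_card_smul_of_smul_ae_eq_self t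
    fun g => .of_eq (smul_iUnion_closedBall_orbit g (const d δ) r)
  rw [Measure.restrict_apply' isClosed_cube.measurableSet,
    Measure.restrict_apply' isClosed_cube.measurableSet, iUnion_closedBall_orbit_inter_V hδ0.le,
    Set.inter_assoc, Set.inter_eq_left.2 V_subset_cube] at hcount
  have hcard : (Nat.card (evenSigns (Fin d)) : ℝ) * 2 = 2 ^ d := by
    exact_mod_cast Fintype.card_fin d ▸ card_evenSigns_mul_two
  rw [cover, Set.inter_comm (cube d), hunion, hcount, ENNReal.toReal_nsmul, nsmul_eq_mul, ← hcard,
    Set.inter_comm]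
  field_simp [Nat.card_pos.ne']

theorem stmt8 (d : ℕ) (hd : 2 ≤ d) (δ r : ℝ) (hδ0 : 0 < δ) (hδ1 : δ ≤ 1) (hr : 0 ≤ r) :
    cover d (design d δ) r =
      (1 / 2) *
        (volume ((C0 d ∪ ⋃ j, U d j) ∩ Metric.closedBall (const d δ) r)).toReal :=
  stmt8_general d hd δ r hδ0

end
end
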